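/- Let φ_t(z) = e^{−t}z and T_t f(z) = e^{−t} f(e^{−t}z). If f ∈ H(p,∞,α) satisfies ‖T_t f − f‖_{p,∞,α} → 0 as t → 0⁺, then f ∈ H_0(p,∞,α), i.e., (1−r)^α M_p(r,f) → 0 as r → 1⁻. -/

import Mathlib

open Complex Metric Set Filter

noncomputable def Mp (p r : ℝ) (f : ℂ → ℂ) : ℝ :=
  ((1 / (2 * Real.pi)) * ∫ θ in (0:ℝ)..(2 * Real.pi),
    ‖f ((r : ℂ) * Complex.exp (θ * Complex.I))‖ ^ p) ^ (1 / p)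

namespace Stmt9Aux

open MeasureTheory


noncomputable def μ0 : Measure ℝ := volume.restrict (Set.Ioc 0 (2 * Real.pi))

lemma two_pi_pos : (0:ℝ) < 2 * Real.pi := by positivity

lemma cont_pow {p : ℝ} (hp : 1 ≤ p) {w : ℝ → ℂ} (hw : Continuous w) :
    Continuous fun θ => ‖w θ‖ ^ p :=
  (hw.norm).rpow_const fun x => Or.inr (by linarith)

lemma eLpNorm_ne_top {p : ℝ} {w : ℝ → ℂ} (hw : Continuous w) :
    eLpNorm w (ENNReal.ofReal p) μ0 ≠ ⊤ := by
  obtain ⟨C, hC⟩ := isCompact_Icc.exists_bound_of_continuousOn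
    (s := Icc (0:ℝ) (2 * Real.pi)) hw.continuousOn
  have hb : ∀ᵐ x ∂μ0, ‖w x‖ ≤ C := by
    filter_upwards [ae_restrict_mem measurableSet_Ioc] with x hx
    exact hC x (Ioc_subset_Icc_self hx)
  refine ne_top_of_le_ne_top ?_ (eLpNorm_le_of_ae_bound hb)
  refine ENNReal.mul_ne_top ?_ ENNReal.ofReal_ne_top
  refine ENNReal.rpow_ne_top_of_nonneg (by positivity) ?_
  simp [μ0, Real.volume_Ioc, ENNReal.mul_eq_top]

lemma key {p : ℝ} (hp : 1 ≤ p) {w : ℝ → ℂ} (hw : Continuous w) :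
    ((1 / (2 * Real.pi)) * ∫ θ in (0:ℝ)..(2 * Real.pi), ‖w θ‖ ^ p) ^ (1/p)
      = (1 / (2 * Real.pi)) ^ (1/p) * (eLpNorm w (ENNReal.ofReal p) μ0).toReal := by
  have hp0 : 0 < p := lt_of_lt_of_le one_pos hp
  have h1 : (∫ θ in (0:ℝ)..(2 * Real.pi), ‖w θ‖ ^ p) = ∫ θ in Set.Ioc 0 (2*Real.pi), ‖w θ‖ ^ p :=
    intervalIntegral.integral_of_le two_pi_pos.le
  have hint : Integrable (fun θ => ‖w θ‖ ^ p) μ0 := by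
    have : IntegrableOn (fun θ => ‖w θ‖ ^ p) (Icc 0 (2*Real.pi)) :=
      ((cont_pow hp hw).continuousOn).integrableOn_compact isCompact_Icc
    exact this.mono_set Ioc_subset_Icc_self
  have h2 : (∫⁻ θ, (‖w θ‖₊ : ENNReal) ^ p ∂μ0) = ENNReal.ofReal (∫ θ in Set.Ioc 0 (2*Real.pi), ‖w θ‖ ^ p) := by
    have : (∫ θ in Set.Ioc 0 (2*Real.pi), ‖w θ‖ ^ p) = ∫ θ, ‖w θ‖ ^ p ∂μ0 := rfl
    rw [this, MeasureTheory.ofReal_integral_eq_lintegral_ofReal hint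
      (Filter.Eventually.of_forall fun x => by positivity)]
    refine lintegral_congr fun x => ?_
    rw [← ENNReal.ofReal_rpow_of_nonneg (norm_nonneg _) hp0.le, ofReal_norm, enorm_eq_nnnorm]
  have h3 : eLpNorm w (ENNReal.ofReal p) μ0
      = (∫⁻ θ, (‖w θ‖₊ : ENNReal) ^ p ∂μ0) ^ (1/p) := by
    rw [MeasureTheory.eLpNorm_eq_lintegral_rpow_enorm_toReal
      (by simpa using hp0) ENNReal.ofReal_ne_top, ENNReal.toReal_ofReal hp0.le]
    simp only [enorm_eq_nnnorm]
  rw [h1, h3, h2, ← ENNReal.toReal_rpow, ENNReal.toReal_ofReal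
      (integral_nonneg fun x => by positivity),
    ← Real.mul_rpow (by positivity) (integral_nonneg fun x => by positivity)]

lemma tri {p : ℝ} (hp : 1 ≤ p) {u v : ℝ → ℂ} (hu : Continuous u) (hv : Continuous v) :
    ((1 / (2 * Real.pi)) * ∫ θ in (0:ℝ)..(2 * Real.pi), ‖u θ - v θ‖ ^ p) ^ (1/p)
      ≤ ((1 / (2 * Real.pi)) * ∫ θ in (0:ℝ)..(2 * Real.pi), ‖u θ‖ ^ p) ^ (1/p)
        + ((1 / (2 * Real.pi)) * ∫ θ in (0:ℝ)..(2 * Real.pi), ‖v θ‖ ^ p) ^ (1/p) := by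
  rw [key hp (w := fun θ => u θ - v θ) (hu.sub hv), key hp hu, key hp hv, ← mul_add]
  refine mul_le_mul_of_nonneg_left ?_ (by positivity)
  refine ENNReal.toReal_le_add ?_ (eLpNorm_ne_top hu) (eLpNorm_ne_top hv)
  exact MeasureTheory.eLpNorm_sub_le hu.aestronglyMeasurable hv.aestronglyMeasurable
    (by simpa using ENNReal.one_le_ofReal.mpr hp)

end Stmt9Aux

namespace Stmt9Aux

lemma norm_circle (r θ : ℝ) : ‖(r:ℂ) * Complex.exp (↑θ * Complex.I)‖ = |r| := by
  simp [map_mul, Complex.norm_exp_ofReal_mul_I]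

lemma Mp_nonneg (p r : ℝ) (f : ℂ → ℂ) : 0 ≤ Mp p r f := by
  apply Real.rpow_nonneg
  apply mul_nonneg (by positivity)
  apply intervalIntegral.integral_nonneg two_pi_pos.le
  intro x _; positivity

lemma cont_circle {f : ℂ → ℂ} (hf : DifferentiableOn ℂ f (ball (0:ℂ) 1))
    {g : ℝ → ℂ} (hg : Continuous g) (hmem : ∀ θ, g θ ∈ ball (0:ℂ) 1) :
    Continuous fun θ => f (g θ) :=
  hf.continuousOn.comp_continuous hg hmem

lemma Mp_le_of_bound {p : ℝ} (hp : 1 ≤ p) {r M : ℝ} {h : ℂ → ℂ}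
    (hcont : Continuous fun θ : ℝ => h ((r:ℂ) * Complex.exp (↑θ * Complex.I)))
    (hM0 : 0 ≤ M)
    (hM : ∀ θ : ℝ, ‖h ((r:ℂ) * Complex.exp (↑θ * Complex.I))‖ ≤ M) :
    Mp p r h ≤ M := by
  have hp0 : 0 < p := lt_of_lt_of_le one_pos hp
  have hint : (∫ θ in (0:ℝ)..(2 * Real.pi), ‖h ((r:ℂ) * Complex.exp (↑θ * Complex.I))‖ ^ p)
      ≤ ∫ _ in (0:ℝ)..(2 * Real.pi), M ^ p := by
    apply intervalIntegral.integral_mono_on two_pi_pos.le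
      ((cont_pow hp hcont).intervalIntegrable _ _) intervalIntegrable_const
    intro x _
    exact Real.rpow_le_rpow (norm_nonneg _) (hM x) hp0.le
  have h2 : (1 / (2 * Real.pi)) * ∫ θ in (0:ℝ)..(2 * Real.pi),
      ‖h ((r:ℂ) * Complex.exp (↑θ * Complex.I))‖ ^ p ≤ M ^ p := by
    have : (∫ _ in (0:ℝ)..(2 * Real.pi), M ^ p) = (2 * Real.pi) * M ^ p := by
      simp [intervalIntegral.integral_const, smul_eq_mul]
    calc (1 / (2 * Real.pi)) * ∫ θ in (0:ℝ)..(2 * Real.pi),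
          ‖h ((r:ℂ) * Complex.exp (↑θ * Complex.I))‖ ^ p
        ≤ (1 / (2 * Real.pi)) * ((2 * Real.pi) * M ^ p) := by
          rw [← this]; exact mul_le_mul_of_nonneg_left hint (by positivity)
      _ = M ^ p := by field_simp
  calc Mp p r h ≤ (M ^ p) ^ (1/p) := by
        apply Real.rpow_le_rpow ?_ h2 (by positivity)
        apply mul_nonneg (by positivity)
        apply intervalIntegral.integral_nonneg two_pi_pos.le
        intro x _; positivity
    _ = M := by
        rw [← Real.rpow_mul hM0, mul_one_div, div_self hp0.ne', Real.rpow_one]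

lemma Mp_tri {p : ℝ} (hp : 1 ≤ p) {r : ℝ} {a b : ℂ → ℂ}
    (ha : Continuous fun θ : ℝ => a ((r:ℂ) * Complex.exp (↑θ * Complex.I)))
    (hb : Continuous fun θ : ℝ => b ((r:ℂ) * Complex.exp (↑θ * Complex.I))) :
    Mp p r (fun z => a z - b z) ≤ Mp p r a + Mp p r b := by
  unfold Mp
  exact tri hp ha hb

end Stmt9Aux

lemma cont_inner (a b : ℂ) :
    Continuous fun θ : ℝ => a * (b * Complex.exp (↑θ * Complex.I)) :=
  continuous_const.mul (continuous_const.mul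
    (Complex.continuous_exp.comp (Complex.continuous_ofReal.mul continuous_const)))

lemma cont_inner' (b : ℂ) :
    Continuous fun θ : ℝ => b * Complex.exp (↑θ * Complex.I) :=
  continuous_const.mul
    (Complex.continuous_exp.comp (Complex.continuous_ofReal.mul continuous_const))


open Stmt9Aux

/-- for the dilation semigroup `φ_t(z) = e^{−t}z` and
`T_t f(z) = e^{−t}f(e^{−t}z)`, if `f ∈ H(p,∞,α)` and `‖T_t f − f‖_{p,∞,α} → 0` as
`t → 0⁺`, then `f ∈ H_0(p,∞,α)`, i.e. `(1−r)^α M_p(r,f) → 0` as `r → 1⁻`. -/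
theorem stmt9 (p α : ℝ) (hp : 1 ≤ p) (hα : 0 < α)
    (f : ℂ → ℂ) (hf : DifferentiableOn ℂ f (ball (0:ℂ) 1))
    (hfb : ∃ B, ∀ r ∈ Ico (0:ℝ) 1, (1 - r) ^ α * Mp p r f ≤ B)
    (hconv : Tendsto (fun t => ⨆ r : Ico (0:ℝ) 1,
        (1 - (r : ℝ)) ^ α * Mp p (r : ℝ)
          (fun z => (Real.exp (-t) : ℂ) * f ((Real.exp (-t) : ℂ) * z) - f z))
      (nhdsWithin 0 (Ioi 0)) (nhds 0)) :
    Tendsto (fun r => (1 - r) ^ α * Mp p r f) (nhdsWithin 1 (Iio 1)) (nhds 0) := by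
  obtain ⟨B, hB⟩ := hfb
  rw [Metric.tendsto_nhdsWithin_nhds]
  intro ε hε
  rw [Metric.tendsto_nhdsWithin_nhds] at hconv
  obtain ⟨δ₁, hδ₁, hS⟩ := hconv (ε/2) (half_pos hε)
  set t := δ₁ / 2 with hts
  have htpos : 0 < t := half_pos hδ₁
  have hdt : dist t 0 < δ₁ := by
    rw [Real.dist_eq, sub_zero, _root_.abs_of_pos htpos]; linarith
  have hSt := hS (mem_Ioi.mpr htpos) hdt
  rw [Real.dist_eq, sub_zero] at hSt
  set c := Real.exp (-t) with hcdef
  have hc0 : 0 < c := Real.exp_pos _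
  have hc1 : c < 1 := by
    rw [hcdef]
    calc Real.exp (-t) < Real.exp 0 := Real.exp_lt_exp.mpr (by linarith)
      _ = 1 := Real.exp_zero
  -- bound for f on closed ball of radius c
  obtain ⟨C, hC⟩ := (isCompact_closedBall (0:ℂ) c).exists_bound_of_continuousOn
    (hf.continuousOn.mono (closedBall_subset_ball hc1))
  have hC0 : 0 ≤ C := le_trans (norm_nonneg _) (hC 0 (mem_closedBall_self hc0.le))
  set g : ℂ → ℂ := fun z => (c:ℂ) * f ((c:ℂ) * z) with hgdef
  -- continuity facts for any s ∈ [0,1)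
  have hcf : ∀ s : ℝ, 0 ≤ s → s < 1 →
      Continuous fun θ : ℝ => f ((s:ℂ) * Complex.exp (↑θ * Complex.I)) := by
    intro s hs0 hs1
    exact cont_circle hf (cont_inner' (s:ℂ)) fun θ => by
      rw [mem_ball_zero_iff, norm_circle, _root_.abs_of_nonneg hs0]; exact hs1
  have hcg : ∀ s : ℝ, 0 ≤ s → s < 1 →
      Continuous fun θ : ℝ => g ((s:ℂ) * Complex.exp (↑θ * Complex.I)) := by
    intro s hs0 hs1
    apply continuous_const.mul
    apply cont_circle hf (cont_inner (c:ℂ) (s:ℂ))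
    intro θ
    rw [mem_ball_zero_iff, norm_mul, norm_circle, _root_.abs_of_nonneg hs0]
    have : ‖(c:ℂ)‖ = c := by
      simp [_root_.abs_of_pos hc0]
    rw [this]
    calc c * s ≤ 1 * s := mul_le_mul_of_nonneg_right hc1.le hs0
      _ = s := one_mul s
      _ < 1 := hs1
  -- bound on Mp of g
  have hMg : ∀ s : ℝ, 0 ≤ s → s < 1 → Mp p s g ≤ C := by
    intro s hs0 hs1
    apply Mp_le_of_bound hp (hcg s hs0 hs1) hC0
    intro θ
    have hmem : (c:ℂ) * ((s:ℂ) * Complex.exp (↑θ * Complex.I)) ∈ closedBall (0:ℂ) c := by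
      rw [mem_closedBall_zero_iff, norm_mul, norm_circle, _root_.abs_of_nonneg hs0]
      have : ‖(c:ℂ)‖ = c := by
        simp [_root_.abs_of_pos hc0]
      rw [this]
      calc c * s ≤ c * 1 := mul_le_mul_of_nonneg_left hs1.le hc0.le
        _ = c := mul_one c
    have : ‖g ((s:ℂ) * Complex.exp (↑θ * Complex.I))‖
        = c * ‖f ((c:ℂ) * ((s:ℂ) * Complex.exp (↑θ * Complex.I)))‖ := by
      rw [hgdef]; simp [norm_mul, _root_.abs_of_pos hc0]
    rw [this]
    calc c * ‖f ((c:ℂ) * ((s:ℂ) * Complex.exp (↑θ * Complex.I)))‖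
        ≤ 1 * C := mul_le_mul hc1.le (hC _ hmem) (norm_nonneg _) zero_le_one
      _ = C := one_mul C
  -- boundedness of the sup family
  have hbdd : BddAbove (range fun s : Ico (0:ℝ) 1 =>
      (1 - (s : ℝ)) ^ α * Mp p (s : ℝ)
        (fun z => (c : ℂ) * f ((c : ℂ) * z) - f z)) := by
    refine ⟨C + B, ?_⟩
    rintro x ⟨⟨s, hs0, hs1⟩, rfl⟩
    have htri : Mp p s (fun z => g z - f z) ≤ Mp p s g + Mp p s f :=
      Mp_tri hp (hcg s hs0 hs1) (hcf s hs0 hs1)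
    have hw1 : (0:ℝ) ≤ (1 - s) ^ α := Real.rpow_nonneg (by linarith) α
    have hw2 : (1 - s) ^ α ≤ 1 := Real.rpow_le_one (by linarith) (by linarith) hα.le
    calc (1 - s) ^ α * Mp p s (fun z => (c : ℂ) * f ((c : ℂ) * z) - f z)
        = (1 - s) ^ α * Mp p s (fun z => g z - f z) := rfl
      _ ≤ (1 - s) ^ α * (Mp p s g + Mp p s f) :=
          mul_le_mul_of_nonneg_left htri hw1
      _ = (1 - s) ^ α * Mp p s g + (1 - s) ^ α * Mp p s f := by ring
      _ ≤ 1 * C + B :=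
          add_le_add (mul_le_mul hw2 (hMg s hs0 hs1) (Mp_nonneg p s g) zero_le_one)
            (hB s ⟨hs0, hs1⟩)
      _ = C + B := by ring
  -- choose δ
  set E := ε / (2 * (C + 1)) with hEdef
  have hE0 : 0 < E := by positivity
  set δ₂ := E ^ (α⁻¹) with hδ₂def
  have hδ₂0 : 0 < δ₂ := Real.rpow_pos_of_pos hE0 _
  have hδ₂α : δ₂ ^ α = E := by
    rw [hδ₂def, ← Real.rpow_mul hE0.le, inv_mul_cancel₀ hα.ne', Real.rpow_one]
  refine ⟨min δ₂ 1, lt_min hδ₂0 one_pos, ?_⟩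
  intro r hr hdist
  have hr1 : r < 1 := hr
  rw [Real.dist_eq, _root_.abs_of_neg (by linarith : r - 1 < 0)] at hdist
  have h1r : 1 - r < min δ₂ 1 := by linarith
  have hr0 : 0 < r := by
    have := lt_of_lt_of_le h1r (min_le_right _ _); linarith
  have h1r2 : 1 - r < δ₂ := lt_of_lt_of_le h1r (min_le_left _ _)
  -- main estimate
  have htri : Mp p r f ≤ Mp p r g + Mp p r (fun z => g z - f z) := by
    have h := Mp_tri hp (a := g) (b := fun z => g z - f z) (hcg r hr0.le hr1)
      ((hcg r hr0.le hr1).sub (hcf r hr0.le hr1))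
    have e : (fun z => g z - (g z - f z)) = f := by funext z; ring
    rwa [e] at h
  have hsup : (1 - r) ^ α * Mp p r (fun z => g z - f z)
      ≤ ⨆ s : Ico (0:ℝ) 1, (1 - (s : ℝ)) ^ α * Mp p (s : ℝ)
        (fun z => (c : ℂ) * f ((c : ℂ) * z) - f z) :=
    le_ciSup hbdd ⟨r, hr0.le, hr1⟩
  have hSlt : (⨆ s : Ico (0:ℝ) 1, (1 - (s : ℝ)) ^ α * Mp p (s : ℝ)
      (fun z => (c : ℂ) * f ((c : ℂ) * z) - f z)) < ε / 2 :=
    lt_of_le_of_lt (le_abs_self _) hSt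
  have hw1 : (0:ℝ) ≤ (1 - r) ^ α := Real.rpow_nonneg (by linarith) α
  have hterm : (1 - r) ^ α * Mp p r f < ε := by
    calc (1 - r) ^ α * Mp p r f
        ≤ (1 - r) ^ α * (Mp p r g + Mp p r (fun z => g z - f z)) :=
          mul_le_mul_of_nonneg_left htri hw1
      _ = (1 - r) ^ α * Mp p r g + (1 - r) ^ α * Mp p r (fun z => g z - f z) := by ring
      _ < ε / 2 + ε / 2 := by
          apply add_lt_add_of_lt_of_le _ (le_of_lt (lt_of_le_of_lt hsup hSlt))
          have hle : (1 - r) ^ α ≤ δ₂ ^ α :=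
            Real.rpow_le_rpow (by linarith) h1r2.le hα.le
          calc (1 - r) ^ α * Mp p r g ≤ δ₂ ^ α * C := by
                exact mul_le_mul hle (hMg r hr0.le hr1) (Mp_nonneg p r g)
                  (Real.rpow_nonneg hδ₂0.le α)
            _ = E * C := by rw [hδ₂α]
            _ < E * (C + 1) := mul_lt_mul_of_pos_left (lt_add_one C) hE0
            _ = ε / 2 := by rw [hEdef]; field_simp
      _ = ε := by ring
  rw [Real.dist_eq, sub_zero, _root_.abs_of_nonneg (mul_nonneg hw1 (Mp_nonneg p r f))]
  exact hterm
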